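/- The function D_λ(T_a,T_b) = (1−λ)‖m(T_a) − m(T_b)‖₂ + λ‖M(T_a) − M(T_b)‖₂ is a metric on rooted binary trees on k labeled tips with positive branch lengths, for every λ ∈ (0,1]. -/

import Mathlib

/-- Rooted binary trees with tips labeled by `Fin k`; each internal node
stores the branch lengths of the edges to its two children. -/
inductive RTree (k : ℕ) : Type
  | leaf : Fin k → RTree k
  | node : ℝ → RTree k → ℝ → RTree k → RTree k

namespace RTree

variable {k : ℕ}

/-- The list of tip labels of a tree. -/
def tipList : RTree k → List (Fin k)
  | leaf i => [i]
  | node _ l _ r => l.tipList ++ r.tipList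

/-- The set of tip labels of a tree. -/
def tips (T : RTree k) : Finset (Fin k) := T.tipList.toFinset

/-- `T` is a phylogenetic tree on `k` labeled tips: each label occurs exactly once. -/
def IsPhylo (T : RTree k) : Prop := T.tipList.Nodup ∧ ∀ i : Fin k, i ∈ T.tipList

/-- All branch lengths are positive. -/
def PosLens : RTree k → Prop
  | leaf _ => True
  | node a l b r => 0 < a ∧ 0 < b ∧ PosLens l ∧ PosLens r

/-- All branch lengths are nonnegative. -/
def NonnegLens : RTree k → Prop
  | leaf _ => True
  | node a l b r => 0 ≤ a ∧ 0 ≤ b ∧ NonnegLens l ∧ NonnegLens r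

/-- All branch lengths are at most `ε`. -/
def LensLE (ε : ℝ) : RTree k → Prop
  | leaf _ => True
  | node a l b r => a ≤ ε ∧ b ≤ ε ∧ LensLE ε l ∧ LensLE ε r

/-- All branch lengths are equal to `1`. -/
def UnitLens : RTree k → Prop
  | leaf _ => True
  | node a l b r => a = 1 ∧ b = 1 ∧ UnitLens l ∧ UnitLens r

/-- `m T i j`: the number of edges on the path from the root to the
most recent common ancestor of tips `i` and `j`. -/
def m : RTree k → Fin k → Fin k → ℕ
  | leaf _, _, _ => 0
  | node _ l _ r, i, j =>
      if i ∈ l.tips ∧ j ∈ l.tips then m l i j + 1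
      else if i ∈ r.tips ∧ j ∈ r.tips then m r i j + 1
      else 0

/-- `Mlen T i j`: the sum of branch lengths on the path from the root to the
most recent common ancestor of tips `i` and `j`. -/
def Mlen : RTree k → Fin k → Fin k → ℝ
  | leaf _, _, _ => 0
  | node a l b r, i, j =>
      if i ∈ l.tips ∧ j ∈ l.tips then Mlen l i j + a
      else if i ∈ r.tips ∧ j ∈ r.tips then Mlen r i j + b
      else 0

/-- Whether the tree is a single leaf. -/
def isLeaf : RTree k → Bool
  | leaf _ => true
  | node _ _ _ _ => false

/-- `pend T i`: the length of the pendant edge leading to tip `i`. -/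
def pend : RTree k → Fin k → ℝ
  | leaf _, _ => 0
  | node a l b r, i =>
      if i ∈ l.tips then (if l.isLeaf then a else pend l i)
      else if i ∈ r.tips then (if r.isLeaf then b else pend r i)
      else 0

/-- The set of clades (tip sets of rooted subtrees) of a tree.  Two rooted
trees have the same topology iff they have the same set of clades, i.e. their
internal edges induce the same tip partitions. -/
def clades : RTree k → Set (Finset (Fin k))
  | leaf i => {{i}}
  | node a l b r => insert (node a l b r).tips (clades l ∪ clades r)

/-- Equality of rooted trees: same topology (ignoring the left/right order of
children) and equal corresponding branch lengths. -/
inductive TreeEq : RTree k → RTree k → Prop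
  | leaf (i : Fin k) : TreeEq (.leaf i) (.leaf i)
  | node {l l' r r' : RTree k} (a b : ℝ) :
      TreeEq l l' → TreeEq r r' → TreeEq (.node a l b r) (.node a l' b r')
  | swap {l l' r r' : RTree k} (a b : ℝ) :
      TreeEq l l' → TreeEq r r' → TreeEq (.node a l b r) (.node b r' a l')

/-- `S` is the rooted subtree of `T` hanging at a node at edge-depth `d`. -/
inductive SubtreeAt : RTree k → ℕ → RTree k → Prop
  | refl (T : RTree k) : SubtreeAt T 0 T
  | left {l S : RTree k} {d : ℕ} (a b : ℝ) (r : RTree k) :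
      SubtreeAt l d S → SubtreeAt (.node a l b r) (d + 1) S
  | right {r S : RTree k} {d : ℕ} (a b : ℝ) (l : RTree k) :
      SubtreeAt r d S → SubtreeAt (.node a l b r) (d + 1) S

/-- Relabel the tips of a tree by a permutation. -/
def relabel (σ : Equiv.Perm (Fin k)) : RTree k → RTree k
  | leaf i => leaf (σ i)
  | node a l b r => node a (relabel σ l) b (relabel σ r)

/-- The set of unordered pairs of distinct tips, represented by ordered pairs `(i, j)` with `i < j`. -/
def tipPairs (k : ℕ) : Finset (Fin k × Fin k) :=
  Finset.univ.filter (fun p => p.1 < p.2)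

/-- The `λ`-entry of the tree vector `v_λ(T)` at the pair `(i, j)`:
`(1 − λ) m_{i,j} + λ M_{i,j}`. -/
noncomputable def vPair (lam : ℝ) (T : RTree k) (i j : Fin k) : ℝ :=
  (1 - lam) * (T.m i j : ℝ) + lam * T.Mlen i j

/-- The `λ`-entry of the tree vector `v_λ(T)` at tip `i`: `(1 − λ) · 1 + λ p_i`. -/
noncomputable def vTip (lam : ℝ) (T : RTree k) (i : Fin k) : ℝ :=
  (1 - lam) * 1 + lam * T.pend i

/-- The metric `d_λ(T_a, T_b) = ‖v_λ(T_a) − v_λ(T_b)‖₂`. -/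
noncomputable def treeDist (lam : ℝ) (Ta Tb : RTree k) : ℝ :=
  Real.sqrt
    ((∑ p ∈ tipPairs k, (vPair lam Ta p.1 p.2 - vPair lam Tb p.1 p.2) ^ 2) +
      ∑ i : Fin k, (vTip lam Ta i - vTip lam Tb i) ^ 2)

/-- `‖m(T_a) − m(T_b)‖₂`, the Euclidean distance between the topology vectors
(the final `k` entries of `m` are all `1` and contribute nothing). -/
noncomputable def mDist (Ta Tb : RTree k) : ℝ :=
  Real.sqrt (∑ p ∈ tipPairs k, ((Ta.m p.1 p.2 : ℝ) - (Tb.m p.1 p.2 : ℝ)) ^ 2)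

/-- `‖M(T_a) − M(T_b)‖₂`, the Euclidean distance between the
branch-length vectors (root-to-MRCA path lengths and pendant lengths). -/
noncomputable def MDist (Ta Tb : RTree k) : ℝ :=
  Real.sqrt
    ((∑ p ∈ tipPairs k, (Ta.Mlen p.1 p.2 - Tb.Mlen p.1 p.2) ^ 2) +
      ∑ i : Fin k, (Ta.pend i - Tb.pend i) ^ 2)

/-- `D_λ(T_a,T_b) = (1−λ)‖m(T_a)−m(T_b)‖₂ + λ‖M(T_a)−M(T_b)‖₂`. -/
noncomputable def DDist (lam : ℝ) (Ta Tb : RTree k) : ℝ :=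
  (1 - lam) * mDist Ta Tb + lam * MDist Ta Tb

section Aux
variable {k : ℕ}

lemma mem_tips {T : RTree k} {i : Fin k} : i ∈ T.tips ↔ i ∈ T.tipList :=
  List.mem_toFinset

lemma tips_node (a b : ℝ) (l r : RTree k) :
    (node a l b r).tips = l.tips ∪ r.tips := by
  simp [tips, tipList]

lemma tips_leaf (i : Fin k) : (leaf i : RTree k).tips = {i} := by
  simp [tips, tipList]

lemma exists_mem_tips (T : RTree k) : ∃ i, i ∈ T.tips := by
  induction T with
  | leaf i => exact ⟨i, by simp [tips_leaf]⟩
  | node a l b r ihl ihr =>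
      obtain ⟨i, hi⟩ := ihl
      exact ⟨i, by simp [tips_node, hi]⟩

lemma nodup_node {a b : ℝ} {l r : RTree k}
    (h : (node a l b r).tipList.Nodup) :
    l.tipList.Nodup ∧ r.tipList.Nodup ∧ ∀ x, x ∈ l.tips → x ∉ r.tips := by
  rw [tipList, List.nodup_append] at h
  exact ⟨h.1, h.2.1, fun x hx hx' => h.2.2 x (mem_tips.mp hx) x (mem_tips.mp hx') rfl⟩

lemma two_mem {a b : ℝ} {l r : RTree k}
    (h : (node a l b r).tipList.Nodup) :
    ∃ p q, p ∈ l.tips ∧ q ∈ r.tips ∧ p ≠ q := by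
  obtain ⟨_, _, hd⟩ := nodup_node h
  obtain ⟨p, hp⟩ := exists_mem_tips l
  obtain ⟨q, hq⟩ := exists_mem_tips r
  exact ⟨p, q, hp, hq, fun e => hd p hp (e ▸ hq)⟩

lemma eq_leaf_of_tips {T : RTree k} {i : Fin k}
    (hn : T.tipList.Nodup) (h : T.tips = {i}) : T = leaf i := by
  cases T with
  | leaf j =>
      rw [tips_leaf, Finset.singleton_inj] at h; rw [h]
  | node a l b r =>
      obtain ⟨p, q, hp, hq, hpq⟩ := two_mem hn
      have hp' : p ∈ (node a l b r).tips := by rw [tips_node]; exact Finset.mem_union_left _ hp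
      have hq' : q ∈ (node a l b r).tips := by rw [tips_node]; exact Finset.mem_union_right _ hq
      rw [h, Finset.mem_singleton] at hp' hq'
      exact absurd (hp'.trans hq'.symm) hpq

lemma nonnegLens_of_posLens {T : RTree k} (h : T.PosLens) : T.NonnegLens := by
  induction T with
  | leaf i => trivial
  | node a l b r ihl ihr =>
      exact ⟨le_of_lt h.1, le_of_lt h.2.1, ihl h.2.2.1, ihr h.2.2.2⟩

lemma Mlen_nonneg {T : RTree k} (h : T.NonnegLens) (i j : Fin k) : 0 ≤ Mlen T i j := by
  induction T with
  | leaf i => exact le_refl 0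
  | node a l b r ihl ihr =>
      rw [Mlen]
      split
      · exact add_nonneg (ihl h.2.2.1) h.1
      · split
        · exact add_nonneg (ihr h.2.2.2) h.2.1
        · exact le_refl 0

lemma Mlen_symm (T : RTree k) (i j : Fin k) : Mlen T i j = Mlen T j i := by
  induction T with
  | leaf i => rfl
  | node a l b r ihl ihr =>
      by_cases h1 : i ∈ l.tips <;> by_cases h2 : j ∈ l.tips <;>
        by_cases h3 : i ∈ r.tips <;> by_cases h4 : j ∈ r.tips <;>
        simp [Mlen, h1, h2, h3, h4, ihl, ihr]

lemma m_symm (T : RTree k) (i j : Fin k) : m T i j = m T j i := by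
  induction T with
  | leaf i => rfl
  | node a l b r ihl ihr =>
      by_cases h1 : i ∈ l.tips <;> by_cases h2 : j ∈ l.tips <;>
        by_cases h3 : i ∈ r.tips <;> by_cases h4 : j ∈ r.tips <;>
        simp [m, h1, h2, h3, h4, ihl, ihr]

lemma Mlen_node_left {a b : ℝ} {l r : RTree k} {i j : Fin k}
    (hi : i ∈ l.tips) (hj : j ∈ l.tips) :
    Mlen (node a l b r) i j = Mlen l i j + a := by
  rw [Mlen, if_pos ⟨hi, hj⟩]

lemma Mlen_node_right {a b : ℝ} {l r : RTree k} {i j : Fin k}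
    (h : ¬(i ∈ l.tips ∧ j ∈ l.tips)) (hi : i ∈ r.tips) (hj : j ∈ r.tips) :
    Mlen (node a l b r) i j = Mlen r i j + b := by
  rw [Mlen, if_neg h, if_pos ⟨hi, hj⟩]

lemma Mlen_node_zero {a b : ℝ} {l r : RTree k} {i j : Fin k}
    (h1 : ¬(i ∈ l.tips ∧ j ∈ l.tips)) (h2 : ¬(i ∈ r.tips ∧ j ∈ r.tips)) :
    Mlen (node a l b r) i j = 0 := by
  rw [Mlen, if_neg h1, if_neg h2]

lemma pend_node_left {a b : ℝ} {l r : RTree k} {i : Fin k} (h : i ∈ l.tips) :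
    pend (node a l b r) i = if l.isLeaf then a else pend l i := by
  rw [pend, if_pos h]

lemma pend_node_right {a b : ℝ} {l r : RTree k} {i : Fin k}
    (h : i ∉ l.tips) (h' : i ∈ r.tips) :
    pend (node a l b r) i = if r.isLeaf then b else pend r i := by
  rw [pend, if_neg h, if_pos h']

end Aux

section Aux2
variable {k : ℕ}

lemma TreeEq.tips_eq {Ta Tb : RTree k} (h : TreeEq Ta Tb) : Ta.tips = Tb.tips := by
  induction h with
  | leaf i => rfl
  | node a b hl hr ihl ihr => rw [tips_node, tips_node, ihl, ihr]
  | swap a b hl hr ihl ihr => rw [tips_node, tips_node, ihl, ihr, Finset.union_comm]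

lemma TreeEq.isLeaf_eq {Ta Tb : RTree k} (h : TreeEq Ta Tb) : Ta.isLeaf = Tb.isLeaf := by
  cases h <;> rfl

lemma TreeEq.pend_eq {Ta Tb : RTree k} (h : TreeEq Ta Tb)
    (hn : Ta.tipList.Nodup) : ∀ i, Ta.pend i = Tb.pend i := by
  induction h with
  | leaf i => intro _; rfl
  | @node l l' r r' a b hl hr ihl ihr =>
      intro i
      obtain ⟨hnl, hnr, hd⟩ := nodup_node hn
      by_cases h1 : i ∈ l.tips
      · rw [pend_node_left h1, pend_node_left (hl.tips_eq ▸ h1), hl.isLeaf_eq]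
        split
        · rfl
        · exact ihl hnl i
      · by_cases h2 : i ∈ r.tips
        · rw [pend_node_right h1 h2,
            pend_node_right (hl.tips_eq ▸ h1) (hr.tips_eq ▸ h2), hr.isLeaf_eq]
          split
          · rfl
          · exact ihr hnr i
        · rw [pend, if_neg h1, if_neg h2, pend,
            if_neg (hl.tips_eq ▸ h1), if_neg (hr.tips_eq ▸ h2)]
  | @swap l l' r r' a b hl hr ihl ihr =>
      intro i
      obtain ⟨hnl, hnr, hd⟩ := nodup_node hn
      by_cases h1 : i ∈ l.tips
      · have h1' : i ∉ r'.tips := fun hi => hd i h1 (hr.tips_eq ▸ hi)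
        rw [pend_node_left h1, pend_node_right h1' (hl.tips_eq ▸ h1), hl.isLeaf_eq]
        split
        · rfl
        · exact ihl hnl i
      · by_cases h2 : i ∈ r.tips
        · rw [pend_node_right h1 h2, pend_node_left (hr.tips_eq ▸ h2), hr.isLeaf_eq]
          split
          · rfl
          · exact ihr hnr i
        · rw [pend, if_neg h1, if_neg h2, pend,
            if_neg (hr.tips_eq ▸ h2), if_neg (hl.tips_eq ▸ h1)]

lemma TreeEq.Mlen_eq {Ta Tb : RTree k} (h : TreeEq Ta Tb)
    (hn : Ta.tipList.Nodup) : ∀ i j, Mlen Ta i j = Mlen Tb i j := by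
  induction h with
  | leaf i => intro _ _; rfl
  | @node l l' r r' a b hl hr ihl ihr =>
      intro i j
      obtain ⟨hnl, hnr, hd⟩ := nodup_node hn
      by_cases h1 : i ∈ l.tips ∧ j ∈ l.tips
      · rw [Mlen_node_left h1.1 h1.2, Mlen_node_left (hl.tips_eq ▸ h1.1) (hl.tips_eq ▸ h1.2),
          ihl hnl]
      · have h1' : ¬(i ∈ l'.tips ∧ j ∈ l'.tips) := fun hc =>
          h1 ⟨hl.tips_eq ▸ hc.1, hl.tips_eq ▸ hc.2⟩
        by_cases h2 : i ∈ r.tips ∧ j ∈ r.tips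
        · rw [Mlen_node_right h1 h2.1 h2.2,
            Mlen_node_right h1' (hr.tips_eq ▸ h2.1) (hr.tips_eq ▸ h2.2), ihr hnr]
        · have h2' : ¬(i ∈ r'.tips ∧ j ∈ r'.tips) := fun hc =>
            h2 ⟨hr.tips_eq ▸ hc.1, hr.tips_eq ▸ hc.2⟩
          rw [Mlen_node_zero h1 h2, Mlen_node_zero h1' h2']
  | @swap l l' r r' a b hl hr ihl ihr =>
      intro i j
      obtain ⟨hnl, hnr, hd⟩ := nodup_node hn
      by_cases h1 : i ∈ l.tips ∧ j ∈ l.tips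
      · have h1' : ¬(i ∈ r'.tips ∧ j ∈ r'.tips) := fun hc =>
          hd i h1.1 (hr.tips_eq ▸ hc.1)
        rw [Mlen_node_left h1.1 h1.2,
          Mlen_node_right h1' (hl.tips_eq ▸ h1.1) (hl.tips_eq ▸ h1.2), ihl hnl]
      · by_cases h2 : i ∈ r.tips ∧ j ∈ r.tips
        · rw [Mlen_node_right h1 h2.1 h2.2,
            Mlen_node_left (hr.tips_eq ▸ h2.1) (hr.tips_eq ▸ h2.2), ihr hnr]
        · have h1' : ¬(i ∈ l'.tips ∧ j ∈ l'.tips) := fun hc =>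
            h1 ⟨hl.tips_eq ▸ hc.1, hl.tips_eq ▸ hc.2⟩
          have h2' : ¬(i ∈ r'.tips ∧ j ∈ r'.tips) := fun hc =>
            h2 ⟨hr.tips_eq ▸ hc.1, hr.tips_eq ▸ hc.2⟩
          rw [Mlen_node_zero h1 h2, Mlen_node_zero h2' h1']

lemma TreeEq.m_eq {Ta Tb : RTree k} (h : TreeEq Ta Tb)
    (hn : Ta.tipList.Nodup) : ∀ i j, m Ta i j = m Tb i j := by
  induction h with
  | leaf i => intro _ _; rfl
  | @node l l' r r' a b hl hr ihl ihr =>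
      intro i j
      obtain ⟨hnl, hnr, hd⟩ := nodup_node hn
      by_cases h1 : i ∈ l.tips ∧ j ∈ l.tips
      · have h1' : i ∈ l'.tips ∧ j ∈ l'.tips := ⟨hl.tips_eq ▸ h1.1, hl.tips_eq ▸ h1.2⟩
        rw [m, if_pos h1, m, if_pos h1', ihl hnl]
      · have h1' : ¬(i ∈ l'.tips ∧ j ∈ l'.tips) := fun hc =>
          h1 ⟨hl.tips_eq ▸ hc.1, hl.tips_eq ▸ hc.2⟩
        by_cases h2 : i ∈ r.tips ∧ j ∈ r.tips
        · have h2' : i ∈ r'.tips ∧ j ∈ r'.tips := ⟨hr.tips_eq ▸ h2.1, hr.tips_eq ▸ h2.2⟩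
          rw [m, if_neg h1, if_pos h2, m, if_neg h1', if_pos h2', ihr hnr]
        · have h2' : ¬(i ∈ r'.tips ∧ j ∈ r'.tips) := fun hc =>
            h2 ⟨hr.tips_eq ▸ hc.1, hr.tips_eq ▸ hc.2⟩
          rw [m, if_neg h1, if_neg h2, m, if_neg h1', if_neg h2']
  | @swap l l' r r' a b hl hr ihl ihr =>
      intro i j
      obtain ⟨hnl, hnr, hd⟩ := nodup_node hn
      by_cases h1 : i ∈ l.tips ∧ j ∈ l.tips
      · have h1'' : ¬(i ∈ r'.tips ∧ j ∈ r'.tips) := fun hc =>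
          hd i h1.1 (hr.tips_eq ▸ hc.1)
        have h1' : i ∈ l'.tips ∧ j ∈ l'.tips := ⟨hl.tips_eq ▸ h1.1, hl.tips_eq ▸ h1.2⟩
        rw [m, if_pos h1, m, if_neg h1'', if_pos h1', ihl hnl]
      · by_cases h2 : i ∈ r.tips ∧ j ∈ r.tips
        · have h2' : i ∈ r'.tips ∧ j ∈ r'.tips := ⟨hr.tips_eq ▸ h2.1, hr.tips_eq ▸ h2.2⟩
          rw [m, if_neg h1, if_pos h2, m, if_pos h2', ihr hnr]
        · have h1' : ¬(i ∈ l'.tips ∧ j ∈ l'.tips) := fun hc =>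
            h1 ⟨hl.tips_eq ▸ hc.1, hl.tips_eq ▸ hc.2⟩
          have h2' : ¬(i ∈ r'.tips ∧ j ∈ r'.tips) := fun hc =>
            h2 ⟨hr.tips_eq ▸ hc.1, hr.tips_eq ▸ hc.2⟩
          rw [m, if_neg h1, if_neg h2, m, if_neg h2', if_neg h1']

end Aux2

section Aux3
variable {k : ℕ}

lemma isLeaf_node (a b : ℝ) (l r : RTree k) : (node a l b r).isLeaf = false := rfl

lemma exists_node_of_tips {c d : ℝ} {x y : RTree k} {l' : RTree k}
    (hn : (node c x d y).tipList.Nodup)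
    (h : (node c x d y : RTree k).tips = l'.tips) :
    ∃ c' x' d' y', l' = node c' x' d' y' := by
  cases l' with
  | leaf j =>
      exfalso
      obtain ⟨p, q, hp, hq, hpq⟩ := two_mem hn
      have hp' : p ∈ (node c x d y : RTree k).tips := by
        rw [tips_node]; exact Finset.mem_union_left _ hp
      have hq' : q ∈ (node c x d y : RTree k).tips := by
        rw [tips_node]; exact Finset.mem_union_right _ hq
      rw [h, tips_leaf, Finset.mem_singleton] at hp' hq'
      exact hpq (hp'.trans hq'.symm)
  | node c' x' d' y' => exact ⟨c', x', d', y', rfl⟩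

lemma side_step {l l' : RTree k} {a a' : ℝ} (_ha : 0 < a) (_ha' : 0 < a')
    (hnl : l.tipList.Nodup) (hnl' : l'.tipList.Nodup)
    (hposl : l.PosLens) (hposl' : l'.PosLens)
    (hL : l.tips = l'.tips)
    (ih : ∀ Tb, l.tipList.Nodup → Tb.tipList.Nodup → l.tips = Tb.tips →
      l.PosLens → Tb.PosLens →
      (∀ i j, i ∈ l.tips → j ∈ l.tips → i ≠ j → Mlen l i j = Mlen Tb i j) →
      (∀ i, i ∈ l.tips → pend l i = pend Tb i) → TreeEq l Tb)
    (hMl : ∀ i j, i ∈ l.tips → j ∈ l.tips → i ≠ j →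
      Mlen l i j + a = Mlen l' i j + a')
    (hpend : ∀ i, i ∈ l.tips →
      (if l.isLeaf then a else pend l i) = (if l'.isLeaf then a' else pend l' i)) :
    a = a' ∧ TreeEq l l' := by
  have haa : a = a' := by
    cases l with
    | leaf i =>
        have hl' : l' = leaf i := eq_leaf_of_tips hnl' (by rw [← hL, tips_leaf])
        subst hl'
        have := hpend i (by rw [tips_leaf]; exact Finset.mem_singleton_self i)
        simpa [isLeaf] using this
    | node c x d y =>
        obtain ⟨c', x', d', y', rfl⟩ := exists_node_of_tips hnl hL
        obtain ⟨hdx1, hdx2, hdx⟩ := nodup_node hnl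
        obtain ⟨hdx1', hdx2', hdx'⟩ := nodup_node hnl'
        obtain ⟨p, q, hp, hq, hpq⟩ := two_mem hnl
        obtain ⟨p', q', hp', hq', hpq'⟩ := two_mem hnl'
        have pmem : p ∈ (node c x d y : RTree k).tips := by
          rw [tips_node]; exact Finset.mem_union_left _ hp
        have qmem : q ∈ (node c x d y : RTree k).tips := by
          rw [tips_node]; exact Finset.mem_union_right _ hq
        have pmem' : p' ∈ (node c x d y : RTree k).tips := by
          rw [hL, tips_node]; exact Finset.mem_union_left _ hp'
        have qmem' : q' ∈ (node c x d y : RTree k).tips := by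
          rw [hL, tips_node]; exact Finset.mem_union_right _ hq'
        have h1 : Mlen (node c x d y : RTree k) p q = 0 :=
          Mlen_node_zero (fun hc => hdx q hc.2 hq) (fun hc => hdx p hp hc.1)
        have h1' : Mlen (node c' x' d' y' : RTree k) p' q' = 0 :=
          Mlen_node_zero (fun hc => hdx' q' hc.2 hq') (fun hc => hdx' p' hp' hc.1)
        have e1 := hMl p q pmem qmem hpq
        have e2 := hMl p' q' pmem' qmem' hpq'
        rw [h1, zero_add] at e1
        rw [h1', zero_add] at e2
        have n1 := Mlen_nonneg (nonnegLens_of_posLens hposl') p q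
        have n2 := Mlen_nonneg (nonnegLens_of_posLens hposl) p' q'
        linarith
  refine ⟨haa, ?_⟩
  apply ih l' hnl hnl' hL hposl hposl'
  · intro i j hi hj hne
    have := hMl i j hi hj hne
    linarith
  · intro i hi
    cases l with
    | leaf i0 =>
        have hl' : l' = leaf i0 := eq_leaf_of_tips hnl' (by rw [← hL, tips_leaf])
        subst hl'
        rfl
    | node c x d y =>
        obtain ⟨c', x', d', y', rfl⟩ := exists_node_of_tips hnl hL
        have := hpend i hi
        simpa [isLeaf] using this

end Aux3

section Aux4
variable {k : ℕ}

lemma treeEq_of_Mlen_pend : ∀ (Ta Tb : RTree k),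
    Ta.tipList.Nodup → Tb.tipList.Nodup → Ta.tips = Tb.tips →
    Ta.PosLens → Tb.PosLens →
    (∀ i j, i ∈ Ta.tips → j ∈ Ta.tips → i ≠ j → Mlen Ta i j = Mlen Tb i j) →
    (∀ i, i ∈ Ta.tips → pend Ta i = pend Tb i) → TreeEq Ta Tb := by
  intro Ta
  induction Ta with
  | leaf i0 =>
      intro Tb hna hnb htips _ _ _ _
      have : Tb = leaf i0 := eq_leaf_of_tips hnb (by rw [← htips, tips_leaf])
      rw [this]
      exact TreeEq.leaf i0
  | node a l b r ihl ihr =>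
      intro Tb hna hnb htips hpa hpb hM hp
      cases Tb with
      | leaf j =>
          obtain ⟨p, q, hpmem, hqmem, hpq⟩ := two_mem hna
          have hp' : p ∈ (node a l b r : RTree k).tips := by
            rw [tips_node]; exact Finset.mem_union_left _ hpmem
          have hq' : q ∈ (node a l b r : RTree k).tips := by
            rw [tips_node]; exact Finset.mem_union_right _ hqmem
          rw [htips, tips_leaf, Finset.mem_singleton] at hp' hq'
          exact absurd (hp'.trans hq'.symm) hpq
      | node a' l' b' r' =>
          obtain ⟨hnl, hnr, hd⟩ := nodup_node hna
          obtain ⟨hnl', hnr', hd'⟩ := nodup_node hnb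
          obtain ⟨ha, hb, hposl, hposr⟩ := hpa
          obtain ⟨ha', hb', hposl', hposr'⟩ := hpb
          have memL : ∀ {i : Fin k}, i ∈ l.tips → i ∈ (node a l b r : RTree k).tips := by
            intro i hi; rw [tips_node]; exact Finset.mem_union_left _ hi
          have memR : ∀ {i : Fin k}, i ∈ r.tips → i ∈ (node a l b r : RTree k).tips := by
            intro i hi; rw [tips_node]; exact Finset.mem_union_right _ hi
          have memTb : ∀ {i : Fin k}, i ∈ (node a l b r : RTree k).tips →
              i ∈ l'.tips ∨ i ∈ r'.tips := by
            intro i hi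
            rw [htips, tips_node] at hi
            exact Finset.mem_union.mp hi
          have nonnegl' := nonnegLens_of_posLens hposl'
          have nonnegr' := nonnegLens_of_posLens hposr'
          have nonnegl := nonnegLens_of_posLens hposl
          have nonnegr := nonnegLens_of_posLens hposr
          -- F1 : same-side pairs in Ta stay same-side in Tb
          have F1 : ∀ i j, i ∈ l.tips → j ∈ l.tips → i ≠ j →
              (i ∈ l'.tips ∧ j ∈ l'.tips) ∨ (i ∈ r'.tips ∧ j ∈ r'.tips) := by
            intro i j hi hj hne
            by_cases c1 : i ∈ l'.tips ∧ j ∈ l'.tips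
            · exact Or.inl c1
            by_cases c2 : i ∈ r'.tips ∧ j ∈ r'.tips
            · exact Or.inr c2
            exfalso
            have e := hM i j (memL hi) (memL hj) hne
            rw [Mlen_node_left hi hj, Mlen_node_zero c1 c2] at e
            have := Mlen_nonneg nonnegl i j
            linarith
          have F1r : ∀ i j, i ∈ r.tips → j ∈ r.tips → i ≠ j →
              (i ∈ l'.tips ∧ j ∈ l'.tips) ∨ (i ∈ r'.tips ∧ j ∈ r'.tips) := by
            intro i j hi hj hne
            by_cases c1 : i ∈ l'.tips ∧ j ∈ l'.tips
            · exact Or.inl c1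
            by_cases c2 : i ∈ r'.tips ∧ j ∈ r'.tips
            · exact Or.inr c2
            exfalso
            have e := hM i j (memR hi) (memR hj) hne
            have hil : ¬ (i ∈ l.tips ∧ j ∈ l.tips) := fun hc => hd i hc.1 hi
            rw [Mlen_node_right hil hi hj, Mlen_node_zero c1 c2] at e
            have := Mlen_nonneg nonnegr i j
            linarith
          -- F2 : cross pairs in Ta stay cross in Tb
          have F2 : ∀ i j, i ∈ l.tips → j ∈ r.tips →
              ¬(i ∈ l'.tips ∧ j ∈ l'.tips) ∧ ¬(i ∈ r'.tips ∧ j ∈ r'.tips) := by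
            intro i j hi hj
            have hne : i ≠ j := fun e => hd i hi (e ▸ hj)
            have e := hM i j (memL hi) (memR hj) hne
            have h1 : ¬(i ∈ l.tips ∧ j ∈ l.tips) := fun hc => hd j hc.2 hj
            have h2 : ¬(i ∈ r.tips ∧ j ∈ r.tips) := fun hc => hd i hi hc.1
            rw [Mlen_node_zero h1 h2] at e
            constructor
            · intro hc
              rw [Mlen_node_left hc.1 hc.2] at e
              have := Mlen_nonneg nonnegl' i j
              linarith
            · intro hc
              have hcl : ¬(i ∈ l'.tips ∧ j ∈ l'.tips) := by
                intro hcc; exact hd' i hcc.1 hc.1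
              rw [Mlen_node_right hcl hc.1 hc.2] at e
              have := Mlen_nonneg nonnegr' i j
              linarith
          obtain ⟨i0, hi0⟩ := exists_mem_tips l
          rcases memTb (memL hi0) with hi0' | hi0'
          · -- aligned case : l ~ l', r ~ r'
            have hA : l.tips ⊆ l'.tips := by
              intro j hj
              by_cases hji : j = i0
              · rw [hji]; exact hi0'
              rcases F1 i0 j hi0 hj (fun e => hji e.symm) with ⟨_, h⟩ | ⟨h, _⟩
              · exact h
              · exact absurd h (hd' i0 hi0')
            have hB : r.tips ⊆ r'.tips := by
              intro j hj
              have ⟨n1, n2⟩ := F2 i0 j hi0 hj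
              rcases memTb (memR hj) with h | h
              · exact absurd ⟨hi0', h⟩ n1
              · exact h
            have hA' : l'.tips ⊆ l.tips := by
              intro j hj
              have : j ∈ (node a l b r : RTree k).tips := by
                rw [htips, tips_node]; exact Finset.mem_union_left _ hj
              rw [tips_node] at this
              rcases Finset.mem_union.mp this with h | h
              · exact h
              · exact absurd (hB h) (hd' j hj)
            have hB' : r'.tips ⊆ r.tips := by
              intro j hj
              have : j ∈ (node a l b r : RTree k).tips := by
                rw [htips, tips_node]; exact Finset.mem_union_right _ hj
              rw [tips_node] at this
              rcases Finset.mem_union.mp this with h | h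
              · exact absurd (hA h) (fun hc => hd' j hc hj)
              · exact h
            have hL : l.tips = l'.tips := Finset.Subset.antisymm hA hA'
            have hR : r.tips = r'.tips := Finset.Subset.antisymm hB hB'
            have sl := side_step ha ha' hnl hnl' hposl hposl' hL ihl
              (by
                intro i j hi hj hne
                have e := hM i j (memL hi) (memL hj) hne
                rwa [Mlen_node_left hi hj, Mlen_node_left (hL ▸ hi) (hL ▸ hj)] at e)
              (by
                intro i hi
                have e := hp i (memL hi)
                rwa [pend_node_left hi, pend_node_left (hL ▸ hi)] at e)
            have sr := side_step hb hb' hnr hnr' hposr hposr' hR ihr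
              (by
                intro i j hi hj hne
                have e := hM i j (memR hi) (memR hj) hne
                have h1 : ¬(i ∈ l.tips ∧ j ∈ l.tips) := fun hc => hd i hc.1 hi
                have h1' : ¬(i ∈ l'.tips ∧ j ∈ l'.tips) := fun hc =>
                  hd i (hA' hc.1) hi
                rwa [Mlen_node_right h1 hi hj, Mlen_node_right h1' (hR ▸ hi) (hR ▸ hj)] at e)
              (by
                intro i hi
                have e := hp i (memR hi)
                have h1 : i ∉ l.tips := fun hc => hd i hc hi
                have h1' : i ∉ l'.tips := fun hc => hd i (hA' hc) hi
                rwa [pend_node_right h1 hi, pend_node_right h1' (hR ▸ hi)] at e)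
            obtain ⟨haa, hTl⟩ := sl
            obtain ⟨hbb, hTr⟩ := sr
            subst haa; subst hbb
            exact TreeEq.node a b hTl hTr
          · -- swapped case : l ~ r', r ~ l'
            have hA : l.tips ⊆ r'.tips := by
              intro j hj
              by_cases hji : j = i0
              · rw [hji]; exact hi0'
              rcases F1 i0 j hi0 hj (fun e => hji e.symm) with ⟨h, _⟩ | ⟨_, h⟩
              · exact absurd hi0' (hd' i0 h)
              · exact h
            have hB : r.tips ⊆ l'.tips := by
              intro j hj
              have ⟨n1, n2⟩ := F2 i0 j hi0 hj
              rcases memTb (memR hj) with h | h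
              · exact h
              · exact absurd ⟨hi0', h⟩ n2
            have hA' : r'.tips ⊆ l.tips := by
              intro j hj
              have : j ∈ (node a l b r : RTree k).tips := by
                rw [htips, tips_node]; exact Finset.mem_union_right _ hj
              rw [tips_node] at this
              rcases Finset.mem_union.mp this with h | h
              · exact h
              · exact absurd hj (hd' j (hB h))
            have hB' : l'.tips ⊆ r.tips := by
              intro j hj
              have : j ∈ (node a l b r : RTree k).tips := by
                rw [htips, tips_node]; exact Finset.mem_union_left _ hj
              rw [tips_node] at this
              rcases Finset.mem_union.mp this with h | h
              · exact absurd (hA h) (hd' j hj)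
              · exact h
            have hL : l.tips = r'.tips := Finset.Subset.antisymm hA hA'
            have hR : r.tips = l'.tips := Finset.Subset.antisymm hB hB'
            have sl := side_step ha hb' hnl hnr' hposl hposr' hL ihl
              (by
                intro i j hi hj hne
                have e := hM i j (memL hi) (memL hj) hne
                have h1' : ¬(i ∈ l'.tips ∧ j ∈ l'.tips) := fun hc =>
                  hd i hi (hB' hc.1)
                rwa [Mlen_node_left hi hj, Mlen_node_right h1' (hL ▸ hi) (hL ▸ hj)] at e)
              (by
                intro i hi
                have e := hp i (memL hi)
                have h1' : i ∉ l'.tips := fun hc => hd i hi (hB' hc)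
                rwa [pend_node_left hi, pend_node_right h1' (hL ▸ hi)] at e)
            have sr := side_step hb ha' hnr hnl' hposr hposl' hR ihr
              (by
                intro i j hi hj hne
                have e := hM i j (memR hi) (memR hj) hne
                have h1 : ¬(i ∈ l.tips ∧ j ∈ l.tips) := fun hc => hd i hc.1 hi
                rwa [Mlen_node_right h1 hi hj, Mlen_node_left (hR ▸ hi) (hR ▸ hj)] at e)
              (by
                intro i hi
                have e := hp i (memR hi)
                have h1 : i ∉ l.tips := fun hc => hd i hc hi
                rwa [pend_node_right h1 hi, pend_node_left (hR ▸ hi)] at e)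
            obtain ⟨hab', hTl⟩ := sl
            obtain ⟨hba', hTr⟩ := sr
            subst hab'; subst hba'
            exact TreeEq.swap a b hTl hTr

end Aux4

section Aux5

lemma sqrt_sum_sq_triangle {ι : Type*} [Fintype ι] (f g h : ι → ℝ) :
    Real.sqrt (∑ i, (f i - g i) ^ 2) ≤
      Real.sqrt (∑ i, (f i - h i) ^ 2) + Real.sqrt (∑ i, (h i - g i) ^ 2) := by
  have key : ∀ u v : EuclideanSpace ℝ ι, dist u v = Real.sqrt (∑ i, (u i - v i) ^ 2) := by
    intro u v
    rw [EuclideanSpace.dist_eq]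
    congr 1
    exact Finset.sum_congr rfl fun i _ => by rw [Real.dist_eq, sq_abs]
  have htri := dist_triangle (α := EuclideanSpace ℝ ι) (WithLp.toLp 2 f) (WithLp.toLp 2 h) (WithLp.toLp 2 g)
  rw [key, key, key] at htri
  exact htri

end Aux5


end RTree
open RTree in
/-- `D_λ(T_a,T_b) = (1−λ)‖m(T_a)−m(T_b)‖₂ + λ‖M(T_a)−M(T_b)‖₂`
is a metric on rooted binary trees on `k` labeled tips with positive branch
lengths, for every `λ ∈ (0,1]`. -/
theorem DDist_is_metric {k : ℕ} (lam : ℝ) (h0 : 0 < lam) (h1 : lam ≤ 1) :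
    (∀ Ta Tb : RTree k, Ta.IsPhylo → Tb.IsPhylo → Ta.PosLens → Tb.PosLens →
      0 ≤ DDist lam Ta Tb) ∧
    (∀ Ta Tb : RTree k, Ta.IsPhylo → Tb.IsPhylo → Ta.PosLens → Tb.PosLens →
      (DDist lam Ta Tb = 0 ↔ TreeEq Ta Tb)) ∧
    (∀ Ta Tb : RTree k, Ta.IsPhylo → Tb.IsPhylo → Ta.PosLens → Tb.PosLens →
      DDist lam Ta Tb = DDist lam Tb Ta) ∧
    (∀ Ta Tb Tc : RTree k, Ta.IsPhylo → Tb.IsPhylo → Tc.IsPhylo →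
      Ta.PosLens → Tb.PosLens → Tc.PosLens →
      DDist lam Ta Tb ≤ DDist lam Ta Tc + DDist lam Tc Tb) := by
  have h1l : 0 ≤ 1 - lam := by linarith
  have mnn : ∀ Ta Tb : RTree k, 0 ≤ mDist Ta Tb := fun _ _ => Real.sqrt_nonneg _
  have Mnn : ∀ Ta Tb : RTree k, 0 ≤ MDist Ta Tb := fun _ _ => Real.sqrt_nonneg _
  refine ⟨?_, ?_, ?_, ?_⟩
  · intro Ta Tb _ _ _ _
    exact add_nonneg (mul_nonneg h1l (mnn _ _)) (mul_nonneg h0.le (Mnn _ _))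
  · intro Ta Tb hpa hpb hla hlb
    constructor
    · intro hD
      have h2 := mul_nonneg h0.le (Mnn Ta Tb)
      have h1 := mul_nonneg h1l (mnn Ta Tb)
      unfold DDist at hD
      have hlM : lam * MDist Ta Tb = 0 := le_antisymm (by linarith) h2
      have hM0 : MDist Ta Tb = 0 := by
        rcases mul_eq_zero.mp hlM with h | h
        · exact absurd h (ne_of_gt h0)
        · exact h
      have hnn1 : 0 ≤ ∑ p ∈ tipPairs k, (Ta.Mlen p.1 p.2 - Tb.Mlen p.1 p.2) ^ 2 :=
        Finset.sum_nonneg fun _ _ => sq_nonneg _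
      have hnn2 : 0 ≤ ∑ i : Fin k, (Ta.pend i - Tb.pend i) ^ 2 :=
        Finset.sum_nonneg fun _ _ => sq_nonneg _
      have hle := Real.sqrt_eq_zero'.mp hM0
      have hs1 : ∑ p ∈ tipPairs k, (Ta.Mlen p.1 p.2 - Tb.Mlen p.1 p.2) ^ 2 = 0 := by
        linarith
      have hs2 : ∑ i : Fin k, (Ta.pend i - Tb.pend i) ^ 2 = 0 := by linarith
      have hMl : ∀ p ∈ tipPairs k, Mlen Ta p.1 p.2 = Mlen Tb p.1 p.2 := by
        intro p hp
        have := (Finset.sum_eq_zero_iff_of_nonneg fun _ _ => sq_nonneg _).mp hs1 p hp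
        have := pow_eq_zero_iff two_ne_zero |>.mp this
        linarith
      have hpend : ∀ i : Fin k, pend Ta i = pend Tb i := by
        intro i
        have := (Finset.sum_eq_zero_iff_of_nonneg fun _ _ => sq_nonneg _).mp hs2 i
          (Finset.mem_univ i)
        have := pow_eq_zero_iff two_ne_zero |>.mp this
        linarith
      have hM : ∀ i j, i ∈ Ta.tips → j ∈ Ta.tips → i ≠ j → Mlen Ta i j = Mlen Tb i j := by
        intro i j _ _ hne
        rcases hne.lt_or_gt with h | h
        · exact hMl (i, j) (by simp [tipPairs, h])
        · rw [Mlen_symm Ta, Mlen_symm Tb]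
          exact hMl (j, i) (by simp [tipPairs, h])
      have ta : Ta.tips = Finset.univ :=
        Finset.eq_univ_iff_forall.mpr fun i => mem_tips.mpr (hpa.2 i)
      have tb : Tb.tips = Finset.univ :=
        Finset.eq_univ_iff_forall.mpr fun i => mem_tips.mpr (hpb.2 i)
      exact treeEq_of_Mlen_pend Ta Tb hpa.1 hpb.1 (ta.trans tb.symm) hla hlb hM
        fun i _ => hpend i
    · intro hT
      have hm := hT.m_eq hpa.1
      have hMe := hT.Mlen_eq hpa.1
      have hpd := hT.pend_eq hpa.1
      have e1 : mDist Ta Tb = 0 := by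
        unfold mDist
        rw [Finset.sum_eq_zero fun p _ => by rw [hm]; ring, Real.sqrt_zero]
      have e2 : MDist Ta Tb = 0 := by
        unfold MDist
        rw [Finset.sum_eq_zero fun p _ => by rw [hMe]; ring,
          Finset.sum_eq_zero fun i _ => by rw [hpd]; ring, add_zero, Real.sqrt_zero]
      unfold DDist
      rw [e1, e2]
      ring
  · intro Ta Tb _ _ _ _
    have e1 : mDist Ta Tb = mDist Tb Ta := by
      unfold mDist
      congr 1
      exact Finset.sum_congr rfl fun p _ => by ring
    have e2 : MDist Ta Tb = MDist Tb Ta := by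
      unfold MDist
      congr 1
      congr 1
      · exact Finset.sum_congr rfl fun p _ => by ring
      · exact Finset.sum_congr rfl fun i _ => by ring
    unfold DDist
    rw [e1, e2]
  · intro Ta Tb Tc _ _ _ _ _ _
    have tm : mDist Ta Tb ≤ mDist Ta Tc + mDist Tc Tb := by
      have H := sqrt_sum_sq_triangle (ι := {p : Fin k × Fin k // p ∈ tipPairs k})
        (fun p => (m Ta p.1.1 p.1.2 : ℝ)) (fun p => (m Tb p.1.1 p.1.2 : ℝ))
        (fun p => (m Tc p.1.1 p.1.2 : ℝ))
      unfold mDist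
      rw [← Finset.sum_coe_sort (tipPairs k), ← Finset.sum_coe_sort (tipPairs k),
        ← Finset.sum_coe_sort (tipPairs k)]
      exact H
    have tM : MDist Ta Tb ≤ MDist Ta Tc + MDist Tc Tb := by
      have expand : ∀ X Y : RTree k, MDist X Y =
          Real.sqrt (∑ z : {p : Fin k × Fin k // p ∈ tipPairs k} ⊕ Fin k,
            ((Sum.elim (fun p : {p : Fin k × Fin k // p ∈ tipPairs k} => Mlen X p.1.1 p.1.2)
                (fun i => pend X i)) z -
             (Sum.elim (fun p : {p : Fin k × Fin k // p ∈ tipPairs k} => Mlen Y p.1.1 p.1.2)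
                (fun i => pend Y i)) z) ^ 2) := by
        intro X Y
        unfold MDist
        congr 1
        rw [Fintype.sum_sum_type]
        congr 1
        rw [← Finset.sum_coe_sort (tipPairs k)]
        rfl
      rw [expand, expand, expand]
      exact sqrt_sum_sq_triangle _ _ _
    have := mul_le_mul_of_nonneg_left tm h1l
    have := mul_le_mul_of_nonneg_left tM h0.le
    unfold DDist
    linarith
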